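/- Let $p$ be a prime, let $i \geq 1$, and for each integer $d$ with $1 \leq d \leq i$ and $p \nmid d$ let $r(d)$ denote the number of natural numbers $s$ with $p^s d \leq i$. Then $\prod_{\substack{1 \leq d \leq i \\ p \nmid d}} \ \prod_{k=0}^{r(d)-1} p^{r(d)-1-k} \left( i + 1 - p^{r(d)-1-k} d \right) = p^{v_p(i!)} \cdot i!$, where $v_p$ denotes the $p$-adic valuation. -/

import Mathlib

/-!
Reversing each inner product (`k ↦ r d - 1 - k`), the factor indexed by `(d, k)` becomes
`p ^ v_p(m) * (i + 1 - m)` with `m = p ^ k * d`. Since `(d, k) ↦ p ^ k * d` is a bijection from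
the index pairs onto `[1, i]`, the product is `p ^ (∑ v_p(m)) * ∏ (i + 1 - m) = p ^ v_p(i!) * i!`.
-/

open Finset
open scoped Nat

namespace Nat

theorem card_setOf_pow_mul_le {p d i : ℕ} (hp : 1 < p) (hd : 0 < d) (hdi : d ≤ i) :
    Nat.card {s : ℕ | p ^ s * d ≤ i} = log p (i / d) + 1 := by
  have hid : i / d ≠ 0 := (Nat.div_pos hdi hd).ne'
  have hset : {s : ℕ | p ^ s * d ≤ i} = ↑(Iic (log p (i / d))) := by
    ext s
    simp [← Nat.le_div_iff_mul_le hd, le_log_iff_pow_le hp hid]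
  rw [hset, Nat.card_coe_set_eq, Set.ncard_coe_finset, card_Iic]

theorem factorization_pow_mul_of_not_dvd {p d : ℕ} (hp : p.Prime) (hd : ¬p ∣ d) (k : ℕ) :
    (p ^ k * d).factorization p = k := by
  have hd0 : d ≠ 0 := by rintro rfl; exact hd (dvd_zero p)
  rw [factorization_mul (pow_ne_zero k hp.ne_zero) hd0, hp.factorization_pow]
  simp [factorization_eq_zero_of_not_dvd hd]

/-- Every `m ∈ [1, i]` is uniquely `p ^ k * d` with `p ∤ d`, and `p ^ k * d ≤ i` exactly when
`k ≤ log p (i / d)`. -/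
theorem prod_Icc_eq_prod_prod_pow_mul {M : Type*} [CommMonoid M] (f : ℕ → M) {p : ℕ}
    (hp : p.Prime) (i : ℕ) :
    ∏ d ∈ (Icc 1 i).filter (fun d => ¬p ∣ d), ∏ k ∈ range (log p (i / d) + 1), f (p ^ k * d) =
      ∏ m ∈ Icc 1 i, f m := by
  have mem_range_iff {d : ℕ} (hd : d ∈ Icc 1 i) (k : ℕ) :
      k ∈ range (log p (i / d) + 1) ↔ p ^ k * d ≤ i := by
    rw [mem_Icc] at hd
    rw [mem_range, Nat.lt_succ_iff, le_log_iff_pow_le hp.one_lt (Nat.div_pos hd.2 hd.1).ne',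
      Nat.le_div_iff_mul_le hd.1]
  rw [prod_sigma']
  refine prod_nbij' (fun x => p ^ x.2 * x.1) (fun m => ⟨ordCompl[p] m, m.factorization p⟩)
    ?_ ?_ ?_ ?_ (fun _ _ => rfl)
  · rintro ⟨d, k⟩ hx
    obtain ⟨hd, hk⟩ := mem_sigma.1 hx
    have hd1 := (mem_Icc.1 (mem_filter.1 hd).1).1
    exact mem_Icc.2 ⟨one_le_iff_ne_zero.2 (mul_ne_zero (pow_ne_zero k hp.ne_zero) (by omega)),
      (mem_range_iff (mem_filter.1 hd).1 k).1 hk⟩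
  · intro m hm
    have hm0 : m ≠ 0 := by rw [mem_Icc] at hm; omega
    have hcompl : ordCompl[p] m ∈ Icc 1 i :=
      mem_Icc.2 ⟨ordCompl_pos p hm0, (ordCompl_le m p).trans (mem_Icc.1 hm).2⟩
    refine mem_sigma.2 ⟨mem_filter.2 ⟨hcompl, not_dvd_ordCompl hp hm0⟩, ?_⟩
    rw [mem_range_iff hcompl, ordProj_mul_ordCompl_eq_self]
    exact (mem_Icc.1 hm).2
  · rintro ⟨d, k⟩ hx
    have hpd : ¬p ∣ d := (mem_filter.1 (mem_sigma.1 hx).1).2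
    rw [factorization_pow_mul_of_not_dvd hp hpd, Nat.mul_div_cancel_left d (pow_pos hp.pos k)]
  · intro m _
    exact ordProj_mul_ordCompl_eq_self m p

theorem prod_Icc_id_eq_factorial (i : ℕ) : ∏ m ∈ Icc 1 i, m = i ! := by
  rw [← Ico_add_one_right_eq_Icc, prod_Ico_id_eq_factorial]

theorem prod_Icc_succ_sub_eq_factorial (i : ℕ) : ∏ m ∈ Icc 1 i, (i + 1 - m) = i ! := by
  have := prod_Ico_reflect (fun m => m) 1 (le_succ (i + 1))
  simp only [add_tsub_cancel_right, Ico_add_one_right_eq_Icc] at this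
  rw [this, show i + 1 + 1 - (i + 1) = 1 by omega, prod_Icc_id_eq_factorial]

theorem prod_Icc_pow_factorization_eq {p : ℕ} (i : ℕ) :
    ∏ m ∈ Icc 1 i, p ^ m.factorization p = p ^ (i !).factorization p := by
  rw [prod_pow_eq_pow_sum, ← prod_Icc_id_eq_factorial,
    factorization_prod fun m hm => by rw [mem_Icc] at hm; omega, Finsupp.finsetSum_apply]

end Nat

theorem prod_prod_eq_pow_factorization_mul_factorial_general
    (p : ℕ) (hp : p.Prime) (i : ℕ) (r : ℕ → ℕ)
    (hr : ∀ d ∈ (Finset.Icc 1 i).filter (fun d => ¬ p ∣ d),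
      r d = Nat.card {s : ℕ | p ^ s * d ≤ i}) :
    ∏ d ∈ (Finset.Icc 1 i).filter (fun d => ¬ p ∣ d),
      ∏ k ∈ Finset.range (r d),
        p ^ (r d - 1 - k) * (i + 1 - p ^ (r d - 1 - k) * d)
      = p ^ ((Nat.factorial i).factorization p) * Nat.factorial i := by
  have inner_eq : ∀ d ∈ (Icc 1 i).filter (fun d => ¬ p ∣ d),
      ∏ k ∈ range (r d), p ^ (r d - 1 - k) * (i + 1 - p ^ (r d - 1 - k) * d) =
        ∏ k ∈ range (Nat.log p (i / d) + 1),
          p ^ (p ^ k * d).factorization p * (i + 1 - p ^ k * d) := by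
    intro d hd
    obtain ⟨hdi, hpd⟩ := mem_filter.1 hd
    rw [prod_range_reflect (fun k => p ^ k * (i + 1 - p ^ k * d)), hr d hd,
      Nat.card_setOf_pow_mul_le hp.one_lt (mem_Icc.1 hdi).1 (mem_Icc.1 hdi).2]
    simp only [Nat.factorization_pow_mul_of_not_dvd hp hpd]
  rw [prod_congr rfl inner_eq,
    Nat.prod_Icc_eq_prod_prod_pow_mul (fun m => p ^ m.factorization p * (i + 1 - m)) hp,
    prod_mul_distrib, Nat.prod_Icc_pow_factorization_eq, Nat.prod_Icc_succ_sub_eq_factorial]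

/-- Let `p` be prime, `i ≥ 1`, and for `1 ≤ d ≤ i` with `p ∤ d` let `r d` be the number of
natural numbers `s` with `p^s * d ≤ i`.  Then
`∏ d, ∏ k < r d, p^(r d - 1 - k) * (i + 1 - p^(r d - 1 - k) * d) = p^(v_p(i!)) * i!`. -/
theorem prod_prod_eq_pow_factorization_mul_factorial
    (p : ℕ) (hp : p.Prime) (i : ℕ) (hi : 1 ≤ i) (r : ℕ → ℕ)
    (hr : ∀ d ∈ (Finset.Icc 1 i).filter (fun d => ¬ p ∣ d),
      r d = Nat.card {s : ℕ | p ^ s * d ≤ i}) :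
    ∏ d ∈ (Finset.Icc 1 i).filter (fun d => ¬ p ∣ d),
      ∏ k ∈ Finset.range (r d),
        p ^ (r d - 1 - k) * (i + 1 - p ^ (r d - 1 - k) * d)
      = p ^ ((Nat.factorial i).factorization p) * Nat.factorial i :=
  prod_prod_eq_pow_factorization_mul_factorial_general p hp i r hr
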